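/- arXiv:1606.09126 — 3 statements merged into one kernel-verified Lean document; each statement's English description precedes it below -/
import Mathlib

section
/- With r, the partitions {I_1,…,I_r}, {J_1,…,J_r} and the limits λ_k = b(J_k)/a(I_k) as in the divergence theorem for the IPFP sequence (X_n)_{n≥0}, define a' by a'_i = λ_k·a_i whenever i ∈ I_k, and b' by b'_j = λ_k^{-1}·b_j whenever j ∈ J_k. Then the sequence (X_{2n})_{n≥0} converges to the unique matrix achieving the minimum of D(Y‖X_0) over all Y ∈ Γ(a',b,X_0), and the sequence (X_{2n+1})_{n≥0} converges to the unique matrix achieving the minimum of D(Y‖X_0) over all Y ∈ Γ(a,b',X_0). -/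
open Filter Topology

namespace IPFP

variable {p q : ℕ}

/-- Row sums `X(i,+)`. -/
noncomputable def rowSum (X : Matrix (Fin p) (Fin q) ℝ) (i : Fin p) : ℝ := ∑ j, X i j

/-- Column sums `X(+,j)`. -/
noncomputable def colSum (X : Matrix (Fin p) (Fin q) ℝ) (j : Fin q) : ℝ := ∑ i, X i j

/-- `R_i(X) = X(i,+)/a_i`. -/
noncomputable def Rrat (a : Fin p → ℝ) (X : Matrix (Fin p) (Fin q) ℝ) (i : Fin p) : ℝ :=
  rowSum X i / a i

/-- `C_j(X) = X(+,j)/b_j`. -/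
noncomputable def Crat (b : Fin q → ℝ) (X : Matrix (Fin p) (Fin q) ℝ) (j : Fin q) : ℝ :=
  colSum X j / b j

/-- `T_R(X)(i,j) = X(i,j)/R_i(X)`. -/
noncomputable def TR (a : Fin p → ℝ) (X : Matrix (Fin p) (Fin q) ℝ) :
    Matrix (Fin p) (Fin q) ℝ :=
  fun i j => X i j / Rrat a X i

/-- `T_C(X)(i,j) = X(i,j)/C_j(X)`. -/
noncomputable def TC (b : Fin q → ℝ) (X : Matrix (Fin p) (Fin q) ℝ) :
    Matrix (Fin p) (Fin q) ℝ :=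
  fun i j => X i j / Crat b X j

/-- The IPFP sequence: `X_0 = X0`, `X_{2n+1} = T_R(X_{2n})`, `X_{2n+2} = T_C(X_{2n+1})`. -/
noncomputable def ipfp (a : Fin p → ℝ) (b : Fin q → ℝ) (X0 : Matrix (Fin p) (Fin q) ℝ) :
    ℕ → Matrix (Fin p) (Fin q) ℝ
  | 0 => X0
  | n + 1 => if Even n then TR a (ipfp a b X0 n) else TC b (ipfp a b X0 n)

/-- Membership in `Γ₀`: nonnegative entries, positive row and column sums. -/
def memGamma0 (X : Matrix (Fin p) (Fin q) ℝ) : Prop :=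
  (∀ i j, 0 ≤ X i j) ∧ (∀ i, 0 < rowSum X i) ∧ (∀ j, 0 < colSum X j)

/-- Membership in `Γ₁`: member of `Γ₀` with total sum `1`. -/
def memGamma1 (X : Matrix (Fin p) (Fin q) ℝ) : Prop :=
  memGamma0 X ∧ ∑ i, ∑ j, X i j = 1

/-- Membership in `Γ(a,b)`: member of `Γ₀` with row marginals `a` and column marginals `b`. -/
def memGamma (a : Fin p → ℝ) (b : Fin q → ℝ) (X : Matrix (Fin p) (Fin q) ℝ) : Prop :=
  memGamma0 X ∧ (∀ i, rowSum X i = a i) ∧ (∀ j, colSum X j = b j)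

/-- `Supp(X) ⊆ Supp(Y)`. -/
def suppSubset (X Y : Matrix (Fin p) (Fin q) ℝ) : Prop :=
  ∀ i j, 0 < X i j → 0 < Y i j

/-- Membership in `Γ(a,b,X0)`: member of `Γ(a,b)` with support contained in `Supp(X0)`. -/
def memGammaSub (a : Fin p → ℝ) (b : Fin q → ℝ) (X0 X : Matrix (Fin p) (Fin q) ℝ) : Prop :=
  memGamma a b X ∧ suppSubset X X0

/-- Relative entropy (I-divergence) `D(Y‖X) = Σ_{(i,j) ∈ Supp X} Y(i,j)·ln(Y(i,j)/X(i,j))`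
(finite expression; it agrees with the relative entropy whenever `Supp Y ⊆ Supp X`,
with the convention `0·ln 0 = 0`). -/
noncomputable def relEnt (Y X : Matrix (Fin p) (Fin q) ℝ) : ℝ :=
  ∑ i, ∑ j, if 0 < X i j then Y i j * Real.log (Y i j / X i j) else 0

/-- A real sequence converges to `l` at an at least geometric rate:
it tends to `l` and `limsup_n |x_n − l|^{1/n} < 1`. -/
noncomputable def geomSeq (x : ℕ → ℝ) (l : ℝ) : Prop :=
  Tendsto x atTop (nhds l) ∧
    Filter.limsup (fun n : ℕ => |x n - l| ^ ((n : ℝ)⁻¹)) atTop < 1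

/-- A matrix sequence converges to `L` at an at least geometric rate (using the
`ℓ¹` norm on entries): it tends to `L` and `limsup_n ‖X_n − L‖^{1/n} < 1`. -/
noncomputable def geomMat (X : ℕ → Matrix (Fin p) (Fin q) ℝ)
    (L : Matrix (Fin p) (Fin q) ℝ) : Prop :=
  Tendsto X atTop (nhds L) ∧
    Filter.limsup (fun n : ℕ => (∑ i, ∑ j, |X n i j - L i j|) ^ ((n : ℝ)⁻¹)) atTop < 1

end IPFP

open IPFP

/-! Every iterate is a diagonal scaling `diag(s) X₀ diag(t)` of `X₀`, so for `Y, Z` supported in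
`Supp X₀` with equal marginals, `D(Y‖X_n) - D(Z‖X_n) = D(Y‖X₀) - D(Z‖X₀)` for every `n`.
Let `W` be the limit of a subsequence of `(X_{2n})` (or `(X_{2n+1})`); it has the limiting
marginals. Taking `Z = W`, Gibbs' inequality `D(Y‖X_n) ≥ ΣY - ΣX_n` and `D(W‖X_n) → 0` show that
`W` minimises `D(·‖X₀)` among matrices with its marginals. Strict convexity of `D(·‖X₀)` makes
this minimiser unique, so all limit points coincide and, by compactness, the subsequence
converges. -/

open Finset Real

namespace IPFP

variable {p q : ℕ}

section Entropy

noncomputable def relEntTerm (y x : ℝ) : ℝ := if 0 < x then y * log (y / x) else 0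

lemma relEnt_eq_sum (Y X : Matrix (Fin p) (Fin q) ℝ) :
    relEnt Y X = ∑ i, ∑ j, relEntTerm (Y i j) (X i j) := rfl

lemma sub_le_relEntTerm {x y : ℝ} (hx : 0 ≤ x) (hy : 0 ≤ y) (hyx : 0 < y → 0 < x) :
    y - x ≤ relEntTerm y x := by
  unfold relEntTerm
  split_ifs with h
  · rcases hy.eq_or_lt with rfl | hy
    · simpa using hx
    · have hlog : 1 - x / y ≤ log (y / x) := by
        simpa only [inv_div] using one_sub_inv_le_log_of_pos (div_pos hy h)
      calc y - x = y * (1 - x / y) := by field_simp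
        _ ≤ y * log (y / x) := mul_le_mul_of_nonneg_left hlog hy.le
  · have : y = 0 := by
      by_contra hy0
      exact h (hyx (hy.lt_of_ne' hy0))
    linarith

lemma relEntTerm_mul_mul {x y s t : ℝ} (hs : 0 < s) (ht : 0 < t) (hy : 0 ≤ y)
    (hyx : 0 < y → 0 < x) :
    relEntTerm y (s * x * t) = relEntTerm y x - y * (log s + log t) := by
  unfold relEntTerm
  by_cases hx : 0 < x
  · rw [if_pos (by positivity), if_pos hx]
    rcases hy.eq_or_lt with rfl | hy
    · simp
    · rw [log_div hy.ne' (by positivity), log_div hy.ne' hx.ne',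
        log_mul (by positivity) ht.ne', log_mul hs.ne' hx.ne']
      ring
  · have hy0 : y = 0 := by
      by_contra hy0
      exact hx (hyx (hy.lt_of_ne' hy0))
    simp [hy0]

lemma mul_log_div_of_nonneg {x y : ℝ} (hx : 0 < x) (hy : 0 ≤ y) :
    y * log (y / x) = y * log y - y * log x := by
  rcases hy.eq_or_lt with rfl | hy
  · simp
  · rw [log_div hy.ne' hx.ne']
    ring

lemma relEntTerm_midpoint_lt {x y z : ℝ} (hx : 0 < x) (hy : 0 ≤ y) (hz : 0 ≤ z) (hyz : y ≠ z) :
    relEntTerm ((y + z) / 2) x < (relEntTerm y x + relEntTerm z x) / 2 := by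
  have key := strictConvexOn_mul_log.2 (Set.mem_Ici.2 hy) (Set.mem_Ici.2 hz) hyz
    (by norm_num : (0 : ℝ) < 1 / 2) (by norm_num : (0 : ℝ) < 1 / 2) (by norm_num)
  simp only [smul_eq_mul] at key
  simp only [relEntTerm, if_pos hx]
  rw [mul_log_div_of_nonneg hx hy, mul_log_div_of_nonneg hx hz,
    mul_log_div_of_nonneg hx (by positivity)]
  have hmid : 1 / 2 * y + 1 / 2 * z = (y + z) / 2 := by ring
  rw [hmid] at key
  linarith

lemma relEntTerm_midpoint_le {x y z : ℝ} (hy : 0 ≤ y) (hz : 0 ≤ z) :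
    relEntTerm ((y + z) / 2) x ≤ (relEntTerm y x + relEntTerm z x) / 2 := by
  rcases eq_or_ne y z with rfl | hyz
  · rw [add_self_div_two, add_self_div_two]
  by_cases hx : 0 < x
  · exact (relEntTerm_midpoint_lt hx hy hz hyz).le
  · simp [relEntTerm, hx]

lemma sum_sub_sum_le_relEnt {X Y : Matrix (Fin p) (Fin q) ℝ} (hX : ∀ i j, 0 ≤ X i j)
    (hY : ∀ i j, 0 ≤ Y i j) (hYX : suppSubset Y X) :
    ∑ i, ∑ j, Y i j - ∑ i, ∑ j, X i j ≤ relEnt Y X := by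
  simp only [relEnt_eq_sum, ← sum_sub_distrib]
  exact sum_le_sum fun i _ => sum_le_sum fun j _ =>
    sub_le_relEntTerm (hX i j) (hY i j) (hYX i j)

lemma relEnt_midpoint_lt {X Y Z : Matrix (Fin p) (Fin q) ℝ} (hY : ∀ i j, 0 ≤ Y i j)
    (hZ : ∀ i j, 0 ≤ Z i j) (hYX : suppSubset Y X) (hZX : suppSubset Z X) (hYZ : Y ≠ Z) :
    relEnt (fun i j => (Y i j + Z i j) / 2) X < (relEnt Y X + relEnt Z X) / 2 := by
  obtain ⟨i₀, j₀, hne⟩ : ∃ i j, Y i j ≠ Z i j := by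
    by_contra! h
    exact hYZ (funext fun i => funext (h i))
  have hX₀ : 0 < X i₀ j₀ := by
    rcases (hY i₀ j₀).eq_or_lt with h | h
    · exact hZX i₀ j₀ ((hZ i₀ j₀).lt_of_ne (h ▸ hne))
    · exact hYX i₀ j₀ h
  simp only [relEnt_eq_sum, ← sum_add_distrib, sum_div]
  refine sum_lt_sum (fun i _ => sum_le_sum fun j _ => relEntTerm_midpoint_le (hY i j) (hZ i j))
    ⟨i₀, mem_univ _, sum_lt_sum (fun j _ => relEntTerm_midpoint_le (hY i₀ j) (hZ i₀ j))
      ⟨j₀, mem_univ _, relEntTerm_midpoint_lt hX₀ (hY i₀ j₀) (hZ i₀ j₀) hne⟩⟩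

end Entropy


section Scaling

variable {X0 X : Matrix (Fin p) (Fin q) ℝ}

def IsDiagonalScaling (X0 X : Matrix (Fin p) (Fin q) ℝ) : Prop :=
  ∃ s : Fin p → ℝ, ∃ t : Fin q → ℝ,
    (∀ i, 0 < s i) ∧ (∀ j, 0 < t j) ∧ ∀ i j, X i j = s i * X0 i j * t j

lemma IsDiagonalScaling.refl (X0 : Matrix (Fin p) (Fin q) ℝ) : IsDiagonalScaling X0 X0 :=
  ⟨1, 1, fun _ => one_pos, fun _ => one_pos, fun i j => by simp⟩

lemma IsDiagonalScaling.pos_iff (h : IsDiagonalScaling X0 X) (i : Fin p) (j : Fin q) :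
    0 < X i j ↔ 0 < X0 i j := by
  obtain ⟨s, t, hs, ht, hX⟩ := h
  rw [hX, mul_pos_iff_of_pos_right (ht j), mul_pos_iff_of_pos_left (hs i)]

lemma IsDiagonalScaling.nonneg (h : IsDiagonalScaling X0 X) (hX0 : ∀ i j, 0 ≤ X0 i j)
    (i : Fin p) (j : Fin q) : 0 ≤ X i j := by
  obtain ⟨s, t, hs, ht, hX⟩ := h
  rw [hX]
  have := hs i; have := ht j; have := hX0 i j
  positivity

lemma IsDiagonalScaling.suppSubset (h : IsDiagonalScaling X0 X) : suppSubset X X0 :=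
  fun i j => (h.pos_iff i j).1

lemma IsDiagonalScaling.rowSum_pos (h : IsDiagonalScaling X0 X) (hX0 : memGamma0 X0)
    (i : Fin p) : 0 < rowSum X i := by
  have := hX0.2.1 i
  simp only [rowSum, sum_pos_iff_of_nonneg fun j _ => h.nonneg hX0.1 i j,
    sum_pos_iff_of_nonneg fun j _ => hX0.1 i j, h.pos_iff] at this ⊢
  exact this

lemma IsDiagonalScaling.colSum_pos (h : IsDiagonalScaling X0 X) (hX0 : memGamma0 X0)
    (j : Fin q) : 0 < colSum X j := by
  have := hX0.2.2 j
  simp only [colSum, sum_pos_iff_of_nonneg fun i _ => h.nonneg hX0.1 i j,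
    sum_pos_iff_of_nonneg fun i _ => hX0.1 i j, h.pos_iff] at this ⊢
  exact this

lemma IsDiagonalScaling.TR {a : Fin p → ℝ} (h : IsDiagonalScaling X0 X) (hX0 : memGamma0 X0)
    (ha : ∀ i, 0 < a i) : IsDiagonalScaling X0 (TR a X) := by
  have hR : ∀ i, 0 < Rrat a X i := fun i => div_pos (h.rowSum_pos hX0 i) (ha i)
  obtain ⟨s, t, hs, ht, hX⟩ := h
  refine ⟨fun i => s i / Rrat a X i, t, fun i => div_pos (hs i) (hR i), ht, fun i j => ?_⟩
  simp only [IPFP.TR, hX i j]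
  ring

lemma IsDiagonalScaling.TC {b : Fin q → ℝ} (h : IsDiagonalScaling X0 X) (hX0 : memGamma0 X0)
    (hb : ∀ j, 0 < b j) : IsDiagonalScaling X0 (TC b X) := by
  have hC : ∀ j, 0 < Crat b X j := fun j => div_pos (h.colSum_pos hX0 j) (hb j)
  obtain ⟨s, t, hs, ht, hX⟩ := h
  refine ⟨s, fun j => t j / Crat b X j, hs, fun j => div_pos (ht j) (hC j), fun i j => ?_⟩
  simp only [IPFP.TC, hX i j]
  ring

lemma sum_sum_mul_add_eq (Y : Matrix (Fin p) (Fin q) ℝ) (f : Fin p → ℝ) (g : Fin q → ℝ) :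
    ∑ i, ∑ j, Y i j * (f i + g j) = ∑ i, rowSum Y i * f i + ∑ j, colSum Y j * g j := by
  simp only [mul_add, sum_add_distrib, rowSum, colSum, sum_mul]
  rw [sum_comm (f := fun i j => Y i j * g j)]

lemma IsDiagonalScaling.relEnt_sub_relEnt (h : IsDiagonalScaling X0 X)
    {Y Z : Matrix (Fin p) (Fin q) ℝ} (hY : ∀ i j, 0 ≤ Y i j) (hZ : ∀ i j, 0 ≤ Z i j)
    (hYX0 : IPFP.suppSubset Y X0) (hZX0 : IPFP.suppSubset Z X0)
    (hrow : ∀ i, rowSum Y i = rowSum Z i) (hcol : ∀ j, colSum Y j = colSum Z j) :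
    relEnt Y X - relEnt Z X = relEnt Y X0 - relEnt Z X0 := by
  obtain ⟨s, t, hs, ht, hX⟩ := h
  have hscale : ∀ W : Matrix (Fin p) (Fin q) ℝ, (∀ i j, 0 ≤ W i j) → IPFP.suppSubset W X0 →
      relEnt W X = relEnt W X0 -
        (∑ i, rowSum W i * log (s i) + ∑ j, colSum W j * log (t j)) := fun W hW hWX0 => by
    simp only [relEnt_eq_sum, hX, relEntTerm_mul_mul (hs _) (ht _) (hW _ _) (hWX0 _ _),
      ← sum_sum_mul_add_eq, sum_sub_distrib]
  rw [hscale Y hY hYX0, hscale Z hZ hZX0]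
  simp only [hrow, hcol]
  ring

end Scaling

section Minimizer

variable {u : Fin p → ℝ} {v : Fin q → ℝ} {X0 : Matrix (Fin p) (Fin q) ℝ}

lemma rowSum_midpoint (Y Z : Matrix (Fin p) (Fin q) ℝ) (i : Fin p) :
    rowSum (fun i j => (Y i j + Z i j) / 2) i = (rowSum Y i + rowSum Z i) / 2 := by
  simp only [rowSum, ← sum_div, sum_add_distrib]

lemma colSum_midpoint (Y Z : Matrix (Fin p) (Fin q) ℝ) (j : Fin q) :
    colSum (fun i j => (Y i j + Z i j) / 2) j = (colSum Y j + colSum Z j) / 2 := by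
  simp only [colSum, ← sum_div, sum_add_distrib]

lemma memGammaSub.midpoint {Y Z : Matrix (Fin p) (Fin q) ℝ} (hY : memGammaSub u v X0 Y)
    (hZ : memGammaSub u v X0 Z) : memGammaSub u v X0 (fun i j => (Y i j + Z i j) / 2) := by
  obtain ⟨⟨⟨hY0, hYr, hYc⟩, hYrow, hYcol⟩, hYX⟩ := hY
  obtain ⟨⟨⟨hZ0, -, -⟩, hZrow, hZcol⟩, hZX⟩ := hZ
  have hrow : ∀ i, rowSum (fun i j => (Y i j + Z i j) / 2) i = u i := fun i => by
    rw [rowSum_midpoint, hYrow, hZrow, add_self_div_two]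
  have hcol : ∀ j, colSum (fun i j => (Y i j + Z i j) / 2) j = v j := fun j => by
    rw [colSum_midpoint, hYcol, hZcol, add_self_div_two]
  refine ⟨⟨⟨fun i j => by have := hY0 i j; have := hZ0 i j; positivity,
    fun i => hrow i ▸ hYrow i ▸ hYr i, fun j => hcol j ▸ hYcol j ▸ hYc j⟩, hrow, hcol⟩,
    fun i j h => ?_⟩
  rcases (hY0 i j).eq_or_lt with hy | hy
  · exact hZX i j (by simpa [← hy] using h)
  · exact hYX i j hy

lemma relEnt_lt_of_isMinOn {W Z : Matrix (Fin p) (Fin q) ℝ}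
    (hmin : IsMinOn (relEnt · X0) {Y | memGammaSub u v X0 Y} W) (hW : memGammaSub u v X0 W)
    (hZ : memGammaSub u v X0 Z) (hZW : Z ≠ W) : relEnt W X0 < relEnt Z X0 := by
  have hle := isMinOn_iff.1 hmin _ (hW.midpoint hZ)
  have hlt := relEnt_midpoint_lt hW.1.1.1 hZ.1.1.1 hW.2 hZ.2 hZW.symm
  linarith

lemma eq_of_isMinOn_relEnt {W W' : Matrix (Fin p) (Fin q) ℝ}
    (hmin : IsMinOn (relEnt · X0) {Y | memGammaSub u v X0 Y} W) (hW : memGammaSub u v X0 W)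
    (hmin' : IsMinOn (relEnt · X0) {Y | memGammaSub u v X0 Y} W')
    (hW' : memGammaSub u v X0 W') : W' = W := by
  by_contra hne
  exact (relEnt_lt_of_isMinOn hmin hW hW' hne).not_ge (isMinOn_iff.1 hmin' W hW)

end Minimizer

section Sequence

variable {a : Fin p → ℝ} {b : Fin q → ℝ} {X0 X : Matrix (Fin p) (Fin q) ℝ}

lemma rowSum_TR {i : Fin p} (h : rowSum X i ≠ 0) : rowSum (TR a X) i = a i := by
  simp only [rowSum, TR, ← sum_div]
  exact div_div_cancel₀ h

lemma colSum_TC {j : Fin q} (h : colSum X j ≠ 0) : colSum (TC b X) j = b j := by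
  simp only [colSum, TC, ← sum_div]
  exact div_div_cancel₀ h

lemma ipfp_two_mul_add_one (n : ℕ) : ipfp a b X0 (2 * n + 1) = TR a (ipfp a b X0 (2 * n)) := by
  rw [ipfp, if_pos (even_two_mul n)]

lemma ipfp_two_mul_add_two (n : ℕ) :
    ipfp a b X0 (2 * n + 2) = TC b (ipfp a b X0 (2 * n + 1)) := by
  rw [ipfp, if_neg (by simp)]

variable (hX0 : memGamma0 X0) (ha : ∀ i, 0 < a i) (hb : ∀ j, 0 < b j)
include hX0 ha hb

lemma isDiagonalScaling_ipfp (n : ℕ) : IsDiagonalScaling X0 (ipfp a b X0 n) := by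
  induction n with
  | zero => exact .refl X0
  | succ n ih =>
    rw [ipfp]
    split_ifs
    · exact ih.TR hX0 ha
    · exact ih.TC hX0 hb

lemma rowSum_ipfp_two_mul_add_one (n : ℕ) (i : Fin p) :
    rowSum (ipfp a b X0 (2 * n + 1)) i = a i := by
  rw [ipfp_two_mul_add_one]
  exact rowSum_TR ((isDiagonalScaling_ipfp hX0 ha hb _).rowSum_pos hX0 i).ne'

lemma colSum_ipfp_two_mul_add_two (n : ℕ) (j : Fin q) :
    colSum (ipfp a b X0 (2 * n + 2)) j = b j := by
  rw [ipfp_two_mul_add_two]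
  exact colSum_TC ((isDiagonalScaling_ipfp hX0 ha hb _).colSum_pos hX0 j).ne'

lemma tendsto_colSum_ipfp_two_mul (j : Fin q) :
    Tendsto (fun n => colSum (ipfp a b X0 (2 * n)) j) atTop (𝓝 (b j)) := by
  refine (tendsto_add_atTop_iff_nat 1).1 ?_
  simpa only [mul_add_one, colSum_ipfp_two_mul_add_two hX0 ha hb] using tendsto_const_nhds

lemma sum_ipfp (hX0₁ : ∑ i, ∑ j, X0 i j = 1) (hsa : ∑ i, a i = 1) (hsb : ∑ j, b j = 1)
    (n : ℕ) : ∑ i, ∑ j, ipfp a b X0 n i j = 1 := by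
  cases n with
  | zero => exact hX0₁
  | succ n =>
    have hscal := isDiagonalScaling_ipfp hX0 ha hb n
    rw [ipfp]
    split_ifs
    · rw [← hsa]
      exact sum_congr rfl fun i _ => rowSum_TR (hscal.rowSum_pos hX0 i).ne'
    · rw [← hsb]
      exact sum_comm.trans <| sum_congr rfl fun j _ => colSum_TC (hscal.colSum_pos hX0 j).ne'

end Sequence

section Limits

variable {ι : Type*} {l : Filter ι} {Xs : ι → Matrix (Fin p) (Fin q) ℝ}
  {X0 W : Matrix (Fin p) (Fin q) ℝ}

lemma tendsto_entry (h : Tendsto Xs l (𝓝 W)) (i : Fin p) (j : Fin q) :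
    Tendsto (fun n => Xs n i j) l (𝓝 (W i j)) :=
  tendsto_pi_nhds.1 (tendsto_pi_nhds.1 h i) j

lemma tendsto_rowSum (h : Tendsto Xs l (𝓝 W)) (i : Fin p) :
    Tendsto (fun n => rowSum (Xs n) i) l (𝓝 (rowSum W i)) :=
  tendsto_finsetSum _ fun j _ => tendsto_entry h i j

lemma tendsto_colSum (h : Tendsto Xs l (𝓝 W)) (j : Fin q) :
    Tendsto (fun n => colSum (Xs n) j) l (𝓝 (colSum W j)) :=
  tendsto_finsetSum _ fun i _ => tendsto_entry h i j

lemma tendsto_rowSum_of_tendsto_Rrat {a : Fin p → ℝ} {i : Fin p} {c : ℝ} (ha : a i ≠ 0)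
    (h : Tendsto (fun n => Rrat a (Xs n) i) l (𝓝 c)) :
    Tendsto (fun n => rowSum (Xs n) i) l (𝓝 (c * a i)) := by
  simpa only [Rrat, div_mul_cancel₀ _ ha] using h.mul_const (a i)

lemma tendsto_colSum_of_tendsto_Crat {b : Fin q → ℝ} {j : Fin q} {c : ℝ} (hb : b j ≠ 0)
    (h : Tendsto (fun n => Crat b (Xs n) j) l (𝓝 c)) :
    Tendsto (fun n => colSum (Xs n) j) l (𝓝 (c * b j)) := by
  simpa only [Crat, div_mul_cancel₀ _ hb] using h.mul_const (b j)

lemma tendsto_relEnt_zero (h : Tendsto Xs l (𝓝 W)) :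
    Tendsto (fun n => relEnt W (Xs n)) l (𝓝 0) := by
  simp only [relEnt_eq_sum]
  rw [show (0 : ℝ) = ∑ _i : Fin p, ∑ _j : Fin q, 0 by simp]
  refine tendsto_finsetSum _ fun i _ => tendsto_finsetSum _ fun j _ => ?_
  have hij := tendsto_entry h i j
  rcases lt_trichotomy (W i j) 0 with hW | hW | hW
  · refine tendsto_const_nhds.congr' ((hij.eventually (gt_mem_nhds hW)).mono fun n hn => ?_)
    simp [relEntTerm, hn.not_gt]
  · simpa [relEntTerm, hW] using tendsto_const_nhds
  · have hlog : Tendsto (fun n => W i j * log (W i j / Xs n i j)) l (𝓝 0) := by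
      have := (tendsto_const_nhds.div hij hW.ne').log (div_ne_zero hW.ne' hW.ne')
      simpa [hW.ne'] using this.const_mul (W i j)
    exact hlog.congr' ((hij.eventually (lt_mem_nhds hW)).mono fun n hn => (if_pos hn).symm)

variable [l.NeBot] {u : Fin p → ℝ} {v : Fin q → ℝ}

lemma memGammaSub_of_tendsto (h : Tendsto Xs l (𝓝 W)) (hXs : ∀ n i j, 0 ≤ Xs n i j)
    (hXsX0 : ∀ n, suppSubset (Xs n) X0)
    (hu : ∀ i, Tendsto (fun n => rowSum (Xs n) i) l (𝓝 (u i)))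
    (hv : ∀ j, Tendsto (fun n => colSum (Xs n) j) l (𝓝 (v j))) (hu0 : ∀ i, 0 < u i)
    (hv0 : ∀ j, 0 < v j) : memGammaSub u v X0 W := by
  have hrow : ∀ i, rowSum W i = u i := fun i => tendsto_nhds_unique (tendsto_rowSum h i) (hu i)
  have hcol : ∀ j, colSum W j = v j := fun j => tendsto_nhds_unique (tendsto_colSum h j) (hv j)
  refine ⟨⟨⟨fun i j => ge_of_tendsto' (tendsto_entry h i j) fun n => hXs n i j,
    fun i => hrow i ▸ hu0 i, fun j => hcol j ▸ hv0 j⟩, hrow, hcol⟩, fun i j hW => ?_⟩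
  by_contra hX0
  have : W i j ≤ 0 := le_of_tendsto' (tendsto_entry h i j) fun n =>
    not_lt.1 fun hpos => hX0 (hXsX0 n i j hpos)
  linarith

lemma relEnt_le_of_tendsto (hX0 : ∀ i j, 0 ≤ X0 i j) (hXs : ∀ n, IsDiagonalScaling X0 (Xs n))
    (h : Tendsto Xs l (𝓝 W)) (hW : ∀ i j, 0 ≤ W i j) (hWX0 : suppSubset W X0)
    {Z : Matrix (Fin p) (Fin q) ℝ} (hZ : ∀ i j, 0 ≤ Z i j) (hZX0 : suppSubset Z X0)
    (hrow : ∀ i, rowSum Z i = rowSum W i) (hcol : ∀ j, colSum Z j = colSum W j) :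
    relEnt W X0 ≤ relEnt Z X0 := by
  have hbound : ∀ n, (∑ i, ∑ j, Z i j - ∑ i, ∑ j, Xs n i j) - relEnt W (Xs n) ≤
      relEnt Z X0 - relEnt W X0 := fun n => by
    rw [← (hXs n).relEnt_sub_relEnt hZ hW hZX0 hWX0 hrow hcol]
    linarith [sum_sub_sum_le_relEnt ((hXs n).nonneg hX0) hZ
      fun i j hpos => ((hXs n).pos_iff i j).2 (hZX0 i j hpos)]
  have hmass : ∑ i, ∑ j, Z i j = ∑ i, ∑ j, W i j := sum_congr rfl fun i _ => hrow i
  have hlim : Tendsto (fun n => (∑ i, ∑ j, Z i j - ∑ i, ∑ j, Xs n i j) - relEnt W (Xs n)) l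
      (𝓝 ((∑ i, ∑ j, Z i j - ∑ i, ∑ j, W i j) - 0)) :=
    (tendsto_const_nhds.sub (tendsto_finsetSum _ fun i _ => tendsto_rowSum h i)).sub
      (tendsto_relEnt_zero h)
  linarith [le_of_tendsto' hlim hbound]

end Limits

section Convergence

variable {X0 : Matrix (Fin p) (Fin q) ℝ} {u : Fin p → ℝ} {v : Fin q → ℝ}

instance : FirstCountableTopology (Matrix (Fin p) (Fin q) ℝ) :=
  inferInstanceAs (FirstCountableTopology (Fin p → Fin q → ℝ))

lemma mem_Icc_of_sum_eq_one {X : Matrix (Fin p) (Fin q) ℝ} (hX : ∀ i j, 0 ≤ X i j)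
    (hX₁ : ∑ i, ∑ j, X i j = 1) (i : Fin p) (j : Fin q) : X i j ∈ Set.Icc 0 1 := by
  refine ⟨hX i j, ?_⟩
  calc X i j ≤ ∑ j', X i j' := single_le_sum (fun j' _ => hX i j') (mem_univ j)
    _ ≤ ∑ i', ∑ j', X i' j' :=
        single_le_sum (f := fun i' => ∑ j', X i' j') (fun i' _ => sum_nonneg fun j' _ => hX i' j')
          (mem_univ i)
    _ = 1 := hX₁

theorem exists_tendsto_relEnt_minimizer (hX0 : ∀ i j, 0 ≤ X0 i j)
    {Xs : ℕ → Matrix (Fin p) (Fin q) ℝ} (hXs : ∀ n, IsDiagonalScaling X0 (Xs n))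
    (hXs₁ : ∀ n, ∑ i, ∑ j, Xs n i j = 1)
    (hu : ∀ i, Tendsto (fun n => rowSum (Xs n) i) atTop (𝓝 (u i)))
    (hv : ∀ j, Tendsto (fun n => colSum (Xs n) j) atTop (𝓝 (v j)))
    (hu0 : ∀ i, 0 < u i) (hv0 : ∀ j, 0 < v j) :
    ∃ L, Tendsto Xs atTop (𝓝 L) ∧ memGammaSub u v X0 L ∧
      ∀ Y, memGammaSub u v X0 Y → Y ≠ L → relEnt L X0 < relEnt Y X0 := by
  set Γ := {Y | memGammaSub u v X0 Y}
  have hcluster : ∀ W, MapClusterPt W atTop Xs → W ∈ Γ ∧ IsMinOn (relEnt · X0) Γ W := by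
    intro W hW
    obtain ⟨ψ, hψ, hlim⟩ := hW.tendsto_subseq
    have hWΓ : memGammaSub u v X0 W := memGammaSub_of_tendsto hlim
      (fun n => (hXs (ψ n)).nonneg hX0) (fun n => (hXs (ψ n)).suppSubset)
      (fun i => (hu i).comp hψ.tendsto_atTop) (fun j => (hv j).comp hψ.tendsto_atTop) hu0 hv0
    refine ⟨hWΓ, isMinOn_iff.2 fun Z hZ => relEnt_le_of_tendsto hX0 (fun n => hXs (ψ n)) hlim
      hWΓ.1.1.1 hWΓ.2 hZ.1.1.1 hZ.2 (fun i => ?_) (fun j => ?_)⟩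
    · rw [hZ.1.2.1, hWΓ.1.2.1]
    · rw [hZ.1.2.2, hWΓ.1.2.2]
  set K : Set (Matrix (Fin p) (Fin q) ℝ) := Set.univ.pi fun _ => Set.univ.pi fun _ => Set.Icc 0 1
  have hK : IsCompact K := isCompact_univ_pi fun _ => isCompact_univ_pi fun _ => isCompact_Icc
  have hXsK : ∀ n, Xs n ∈ K := fun n => Set.mem_univ_pi.2 fun i => Set.mem_univ_pi.2
    (mem_Icc_of_sum_eq_one ((hXs n).nonneg hX0) (hXs₁ n) i)
  obtain ⟨L, -, hL⟩ := hK.exists_mapClusterPt (f := atTop) (tendsto_principal.2 (.of_forall hXsK))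
  obtain ⟨hLΓ, hLmin⟩ := hcluster L hL
  refine ⟨L, hK.tendsto_nhds_of_unique_mapClusterPt (.of_forall hXsK) fun W _ hW => ?_, hLΓ,
    fun Y hY hYL => relEnt_lt_of_isMinOn hLmin hLΓ hY hYL⟩
  obtain ⟨hWΓ, hWmin⟩ := hcluster W hW
  exact eq_of_isMinOn_relEnt hLmin hLΓ hWmin hWΓ

end Convergence

end IPFP

theorem ipfp_divergence_limits_general
    (p q : ℕ)
    (a : Fin p → ℝ) (b : Fin q → ℝ)
    (ha : ∀ i, 0 < a i) (hb : ∀ j, 0 < b j)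
    (hsa : ∑ i, a i = 1) (hsb : ∑ j, b j = 1)
    (X0 : Matrix (Fin p) (Fin q) ℝ) (hX0 : memGamma1 X0)
    (r : ℕ)
    (I : Fin r → Finset (Fin p)) (J : Fin r → Finset (Fin q))
    (hI : ∀ i : Fin p, ∃! k, i ∈ I k) (hIne : ∀ k, (I k).Nonempty)
    (hJ : ∀ j : Fin q, ∃! k, j ∈ J k) (hJne : ∀ k, (J k).Nonempty)
    (lam : Fin r → ℝ)
    (hlam : ∀ k, lam k = (∑ j ∈ J k, b j) / ∑ i ∈ I k, a i)
    (hR : ∀ k, ∀ i ∈ I k,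
      Tendsto (fun n => Rrat a (ipfp a b X0 (2 * n)) i) atTop (nhds (lam k)))
    (hC : ∀ k, ∀ j ∈ J k,
      Tendsto (fun n => Crat b (ipfp a b X0 (2 * n + 1)) j) atTop (nhds ((lam k)⁻¹)))
    (a' : Fin p → ℝ) (ha' : ∀ k, ∀ i ∈ I k, a' i = lam k * a i)
    (b' : Fin q → ℝ) (hb' : ∀ k, ∀ j ∈ J k, b' j = (lam k)⁻¹ * b j) :
    (∃ Leven : Matrix (Fin p) (Fin q) ℝ,
      Tendsto (fun n => ipfp a b X0 (2 * n)) atTop (nhds Leven) ∧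
      memGammaSub a' b X0 Leven ∧
      (∀ Y, memGammaSub a' b X0 Y → Y ≠ Leven → relEnt Leven X0 < relEnt Y X0)) ∧
    (∃ Lodd : Matrix (Fin p) (Fin q) ℝ,
      Tendsto (fun n => ipfp a b X0 (2 * n + 1)) atTop (nhds Lodd) ∧
      memGammaSub a b' X0 Lodd ∧
      (∀ Y, memGammaSub a b' X0 Y → Y ≠ Lodd → relEnt Lodd X0 < relEnt Y X0)) := by
  obtain ⟨hX0, hX0₁⟩ := hX0
  have hlam_pos : ∀ k, 0 < lam k := fun k => hlam k ▸
    div_pos (sum_pos (fun j _ => hb j) (hJne k)) (sum_pos (fun i _ => ha i) (hIne k))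
  have hscal := isDiagonalScaling_ipfp hX0 ha hb
  have hmass := sum_ipfp hX0 ha hb hX0₁ hsa hsb
  constructor
  · refine exists_tendsto_relEnt_minimizer hX0.1 (fun n => hscal _) (fun n => hmass _)
      (fun i => ?_) (tendsto_colSum_ipfp_two_mul hX0 ha hb) (fun i => ?_) hb <;>
    obtain ⟨k, hk, -⟩ := hI i <;> rw [ha' k i hk]
    · exact tendsto_rowSum_of_tendsto_Rrat (ha i).ne' (hR k i hk)
    · exact mul_pos (hlam_pos k) (ha i)
  · refine exists_tendsto_relEnt_minimizer hX0.1 (fun n => hscal _) (fun n => hmass _)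
      (fun i => ?_) (fun j => ?_) ha (fun j => ?_)
    · simpa only [rowSum_ipfp_two_mul_add_one hX0 ha hb] using tendsto_const_nhds
    all_goals obtain ⟨k, hk, -⟩ := hJ j; rw [hb' k j hk]
    · exact tendsto_colSum_of_tendsto_Crat (hb j).ne' (hC k j hk)
    · exact mul_pos (inv_pos.2 (hlam_pos k)) (hb j)

/-- With `r`, the partitions `{I_k}`, `{J_k}` and the limits
`λ_k = b(J_k)/a(I_k)` as in the divergence theorem, and the modified marginals
`a'_i = λ_k·a_i` (`i ∈ I_k`), `b'_j = λ_k⁻¹·b_j` (`j ∈ J_k`): the sequence `(X_{2n})`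
converges to the unique minimizer of `D(·‖X_0)` over `Γ(a',b,X_0)`, and `(X_{2n+1})`
converges to the unique minimizer of `D(·‖X_0)` over `Γ(a,b',X_0)`. -/
theorem ipfp_divergence_limits
    (p q : ℕ) (hp : 2 ≤ p) (hq : 2 ≤ q)
    (a : Fin p → ℝ) (b : Fin q → ℝ)
    (ha : ∀ i, 0 < a i) (hb : ∀ j, 0 < b j)
    (hsa : ∑ i, a i = 1) (hsb : ∑ j, b j = 1)
    (X0 : Matrix (Fin p) (Fin q) ℝ) (hX0 : memGamma1 X0)
    (r : ℕ) (hr : 0 < r) (hrpq : r ≤ min p q)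
    (I : Fin r → Finset (Fin p)) (J : Fin r → Finset (Fin q))
    (hI : ∀ i : Fin p, ∃! k, i ∈ I k) (hIne : ∀ k, (I k).Nonempty)
    (hJ : ∀ j : Fin q, ∃! k, j ∈ J k) (hJne : ∀ k, (J k).Nonempty)
    (lam : Fin r → ℝ)
    (hlam : ∀ k, lam k = (∑ j ∈ J k, b j) / ∑ i ∈ I k, a i)
    (hR : ∀ k, ∀ i ∈ I k,
      Tendsto (fun n => Rrat a (ipfp a b X0 (2 * n)) i) atTop (nhds (lam k)))
    (hC : ∀ k, ∀ j ∈ J k,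
      Tendsto (fun n => Crat b (ipfp a b X0 (2 * n + 1)) j) atTop (nhds ((lam k)⁻¹)))
    (a' : Fin p → ℝ) (ha' : ∀ k, ∀ i ∈ I k, a' i = lam k * a i)
    (b' : Fin q → ℝ) (hb' : ∀ k, ∀ j ∈ J k, b' j = (lam k)⁻¹ * b j) :
    (∃ Leven : Matrix (Fin p) (Fin q) ℝ,
      Tendsto (fun n => ipfp a b X0 (2 * n)) atTop (nhds Leven) ∧
      memGammaSub a' b X0 Leven ∧
      (∀ Y, memGammaSub a' b X0 Y → Y ≠ Leven → relEnt Leven X0 < relEnt Y X0)) ∧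
    (∃ Lodd : Matrix (Fin p) (Fin q) ℝ,
      Tendsto (fun n => ipfp a b X0 (2 * n + 1)) atTop (nhds Lodd) ∧
      memGammaSub a b' X0 Lodd ∧
      (∀ Y, memGammaSub a b' X0 Y → Y ≠ Lodd → relEnt Lodd X0 < relEnt Y X0)) :=
  ipfp_divergence_limits_general p q a b ha hb hsa hsb X0 hX0 r I J hI hIne hJ hJne lam hlam hR hC
    a' ha' b' hb'
end

section
/- Keep the notation of the divergence theorem for the IPFP sequence, with partitions {I_1,…,I_r}, {J_1,…,J_r} and the limits λ_1 < ⋯ < λ_r. Fix k ∈ {1,…,r}, set P = {1,…,p} \ (I_1 ∪ ⋯ ∪ I_{k−1}) and Q = {1,…,q} \ (J_1 ∪ ⋯ ∪ J_{k−1}), and consider the restricted fitting problem with marginals a(·|P) = (a_i/a(P))_{i∈P} and b(·|Q) = (b_j/b(Q))_{j∈Q} and initial matrix (X_0(i,j))_{(i,j)∈P×Q}. If k = r, this restricted problem admits a solution (there is a nonnegative matrix on P×Q with these marginals whose support is contained in the support of the restricted initial matrix). If k < r, the set A_k×B_k := I_k×(Q\J_k) is a cause of incompatibility of the restricted problem,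 and among all causes of incompatibility A×B that maximize the ratio a(A)/b(Q\B), it is the one with the largest set A and the smallest set B. -/
open Filter Topology

open IPFP

/-- `A × B` is a cause of incompatibility of the restricted fitting problem on `P × Q`
(with marginals `a(·|P)`, `b(·|Q)` and initial matrix `X_0` restricted to `P × Q`):
`A`, `B` are nonempty, `A ⊆ P`, `B ⊆ Q`, `X_0` vanishes on `A × B`, and
`a(A|P) > b(Q∖B|Q)`, i.e. `a(A)·b(Q) > a(P)·b(Q∖B)`. -/
def causeIncompat {p q : ℕ} (a : Fin p → ℝ) (b : Fin q → ℝ)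
    (X0 : Matrix (Fin p) (Fin q) ℝ) (P : Finset (Fin p)) (Q : Finset (Fin q))
    (A : Finset (Fin p)) (B : Finset (Fin q)) : Prop :=
  A.Nonempty ∧ B.Nonempty ∧ A ⊆ P ∧ B ⊆ Q ∧
  (∀ i ∈ A, ∀ j ∈ B, X0 i j = 0) ∧
  (∑ i ∈ P, a i) * (∑ j ∈ Q \ B, b j) < (∑ i ∈ A, a i) * ∑ j ∈ Q, b j


namespace IPFPAux
open IPFP Filter Topology

variable {p q : ℕ}

lemma entry_le_one {X : Matrix (Fin p) (Fin q) ℝ} (h : memGamma1 X) (i : Fin p) (j : Fin q) :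
    X i j ≤ 1 := by
  obtain ⟨⟨hnn, _, _⟩, htot⟩ := h
  calc X i j ≤ ∑ j', X i j' :=
        Finset.single_le_sum (fun j' _ => hnn i j') (Finset.mem_univ j)
    _ ≤ ∑ i', ∑ j', X i' j' :=
        Finset.single_le_sum (fun i' _ => Finset.sum_nonneg fun j' _ => hnn i' j')
          (Finset.mem_univ i)
    _ = 1 := htot

lemma TR_step {a : Fin p → ℝ} (ha : ∀ i, 0 < a i) (hsa : ∑ i, a i = 1)
    {X : Matrix (Fin p) (Fin q) ℝ} (hX : memGamma1 X) :
    memGamma1 (TR a X) ∧ (∀ i j, 0 < TR a X i j ↔ 0 < X i j) ∧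
      (∀ i, rowSum (TR a X) i = a i) := by
  obtain ⟨⟨hnn, hrow, hcol⟩, htot⟩ := hX
  have hR : ∀ i, 0 < Rrat a X i := fun i => div_pos (hrow i) (ha i)
  have hiff : ∀ i j, 0 < TR a X i j ↔ 0 < X i j := by
    intro i j
    constructor
    · intro h
      by_contra hx
      push_neg at hx
      have : TR a X i j ≤ 0 := div_nonpos_iff.mpr (Or.inr ⟨hx, (hR i).le⟩)
      linarith
    · intro h
      exact div_pos h (hR i)
  have hrowTR : ∀ i, rowSum (TR a X) i = a i := by
    intro i
    have hs : rowSum X i ≠ 0 := (hrow i).ne'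
    have hai : a i ≠ 0 := (ha i).ne'
    show ∑ j, X i j / Rrat a X i = a i
    rw [← Finset.sum_div]
    show rowSum X i / Rrat a X i = a i
    rw [Rrat, div_div_eq_mul_div, mul_comm, mul_div_assoc, div_self hs, mul_one]
  have hnnTR : ∀ i j, 0 ≤ TR a X i j := fun i j => div_nonneg (hnn i j) (hR i).le
  refine ⟨⟨⟨hnnTR, ?_, ?_⟩, ?_⟩, hiff, hrowTR⟩
  · intro i; rw [hrowTR]; exact ha i
  · intro j
    obtain ⟨i0, hi0⟩ : ∃ i, 0 < X i j := by
      by_contra hc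
      push_neg at hc
      have : colSum X j ≤ 0 := Finset.sum_nonpos fun i _ => hc i
      linarith [hcol j]
    exact Finset.sum_pos' (fun i _ => hnnTR i j)
      ⟨i0, Finset.mem_univ i0, (hiff i0 j).mpr hi0⟩
  · calc ∑ i, ∑ j, TR a X i j = ∑ i, rowSum (TR a X) i := rfl
      _ = ∑ i, a i := Finset.sum_congr rfl fun i _ => hrowTR i
      _ = 1 := hsa

lemma TC_step {b : Fin q → ℝ} (hb : ∀ j, 0 < b j) (hsb : ∑ j, b j = 1)
    {X : Matrix (Fin p) (Fin q) ℝ} (hX : memGamma1 X) :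
    memGamma1 (TC b X) ∧ (∀ i j, 0 < TC b X i j ↔ 0 < X i j) ∧
      (∀ j, colSum (TC b X) j = b j) := by
  obtain ⟨⟨hnn, hrow, hcol⟩, htot⟩ := hX
  have hC : ∀ j, 0 < Crat b X j := fun j => div_pos (hcol j) (hb j)
  have hiff : ∀ i j, 0 < TC b X i j ↔ 0 < X i j := by
    intro i j
    constructor
    · intro h
      by_contra hx
      push_neg at hx
      have : TC b X i j ≤ 0 := div_nonpos_iff.mpr (Or.inr ⟨hx, (hC j).le⟩)
      linarith
    · intro h
      exact div_pos h (hC j)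
  have hcolTC : ∀ j, colSum (TC b X) j = b j := by
    intro j
    have hs : colSum X j ≠ 0 := (hcol j).ne'
    show ∑ i, X i j / Crat b X j = b j
    rw [← Finset.sum_div]
    show colSum X j / Crat b X j = b j
    rw [Crat, div_div_eq_mul_div, mul_comm, mul_div_assoc, div_self hs, mul_one]
  have hnnTC : ∀ i j, 0 ≤ TC b X i j := fun i j => div_nonneg (hnn i j) (hC j).le
  refine ⟨⟨⟨hnnTC, ?_, ?_⟩, ?_⟩, hiff, hcolTC⟩
  · intro i
    obtain ⟨j0, hj0⟩ : ∃ j, 0 < X i j := by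
      by_contra hc
      push_neg at hc
      have : rowSum X i ≤ 0 := Finset.sum_nonpos fun j _ => hc j
      linarith [hrow i]
    exact Finset.sum_pos' (fun j _ => hnnTC i j)
      ⟨j0, Finset.mem_univ j0, (hiff i j0).mpr hj0⟩
  · intro j; rw [hcolTC]; exact hb j
  · calc ∑ i, ∑ j, TC b X i j = ∑ j, ∑ i, TC b X i j := Finset.sum_comm
      _ = ∑ j, colSum (TC b X) j := rfl
      _ = ∑ j, b j := Finset.sum_congr rfl fun j _ => hcolTC j
      _ = 1 := hsb

lemma ipfp_succ (a : Fin p → ℝ) (b : Fin q → ℝ) (X0 : Matrix (Fin p) (Fin q) ℝ) (n : ℕ) :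
    ipfp a b X0 (n + 1) =
      if Even n then TR a (ipfp a b X0 n) else TC b (ipfp a b X0 n) := rfl

lemma ipfp_invariant {a : Fin p → ℝ} {b : Fin q → ℝ}
    (ha : ∀ i, 0 < a i) (hb : ∀ j, 0 < b j)
    (hsa : ∑ i, a i = 1) (hsb : ∑ j, b j = 1)
    {X0 : Matrix (Fin p) (Fin q) ℝ} (hX0 : memGamma1 X0) (n : ℕ) :
    memGamma1 (ipfp a b X0 n) ∧ (∀ i j, 0 < ipfp a b X0 n i j ↔ 0 < X0 i j) := by
  induction n with
  | zero => exact ⟨hX0, fun i j => Iff.rfl⟩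
  | succ n ih =>
    rw [ipfp_succ]
    by_cases h : Even n
    · rw [if_pos h]
      obtain ⟨h1, h2, _⟩ := TR_step ha hsa ih.1
      exact ⟨h1, fun i j => (h2 i j).trans (ih.2 i j)⟩
    · rw [if_neg h]
      obtain ⟨h1, h2, _⟩ := TC_step hb hsb ih.1
      exact ⟨h1, fun i j => (h2 i j).trans (ih.2 i j)⟩

lemma ipfp_even_succ (a : Fin p → ℝ) (b : Fin q → ℝ) (X0 : Matrix (Fin p) (Fin q) ℝ) (n : ℕ) :
    ipfp a b X0 (2 * n + 1) = TR a (ipfp a b X0 (2 * n)) := by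
  rw [ipfp_succ, if_pos (even_two_mul n)]

lemma ipfp_odd_succ (a : Fin p → ℝ) (b : Fin q → ℝ) (X0 : Matrix (Fin p) (Fin q) ℝ) (n : ℕ) :
    ipfp a b X0 (2 * n + 2) = TC b (ipfp a b X0 (2 * n + 1)) := by
  show ipfp a b X0 ((2 * n + 1) + 1) = _
  rw [ipfp_succ, if_neg]
  simp [Nat.even_add_one]

lemma ipfp_recur (a : Fin p → ℝ) (b : Fin q → ℝ) (X0 : Matrix (Fin p) (Fin q) ℝ)
    (n : ℕ) (i : Fin p) (j : Fin q) :
    ipfp a b X0 (2 * n + 2) i j =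
      ipfp a b X0 (2 * n) i j /
        (Rrat a (ipfp a b X0 (2 * n)) i * Crat b (ipfp a b X0 (2 * n + 1)) j) := by
  have h3 : ipfp a b X0 (2 * n + 1) i j
      = ipfp a b X0 (2 * n) i j / Rrat a (ipfp a b X0 (2 * n)) i := by
    rw [ipfp_even_succ]; rfl
  rw [ipfp_odd_succ]
  show ipfp a b X0 (2 * n + 1) i j / Crat b (ipfp a b X0 (2 * n + 1)) j = _
  rw [h3, div_div]

lemma growth_lemma {y γ : ℕ → ℝ} {L : ℝ} (hbd : ∀ n, y n ≤ 1)
    (hγ : ∀ n, 0 < γ n) (hrec : ∀ n, y (n + 1) = y n / γ n)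
    (hlim : Tendsto γ atTop (nhds L)) (hL0 : 0 < L) (hL : L < 1)
    (hy : 0 < y 0) : False := by
  have hpos : ∀ n, 0 < y n := by
    intro n
    induction n with
    | zero => exact hy
    | succ n ih => rw [hrec]; exact div_pos ih (hγ n)
  set c : ℝ := (L + 1) / 2 with hc
  have hc0 : 0 < c := by rw [hc]; linarith
  have hc1 : c < 1 := by rw [hc]; linarith
  have hLc : L < c := by rw [hc]; linarith
  have hev : ∀ᶠ n in atTop, γ n < c := hlim.eventually (eventually_lt_nhds hLc)
  obtain ⟨N, hN⟩ := eventually_atTop.mp hev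
  have key : ∀ t, y N * (c⁻¹) ^ t ≤ y (N + t) := by
    intro t
    induction t with
    | zero => simp
    | succ t iht =>
      have hγc : γ (N + t) < c := hN _ (Nat.le_add_right _ _)
      have h1 : y (N + t) / c ≤ y (N + t) / γ (N + t) :=
        div_le_div_of_nonneg_left (hpos _).le (hγ _) hγc.le
      have h2 : y N * c⁻¹ ^ t / c ≤ y (N + t) / c :=
        (div_le_div_iff_of_pos_right hc0).mpr iht
      have h3 : y N * c⁻¹ ^ (t + 1) = y N * c⁻¹ ^ t / c := by
        rw [pow_succ]; field_simp
      rw [show N + (t + 1) = (N + t) + 1 from rfl, hrec]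
      calc y N * c⁻¹ ^ (t + 1) = y N * c⁻¹ ^ t / c := h3
        _ ≤ y (N + t) / c := h2
        _ ≤ y (N + t) / γ (N + t) := h1
  have hinv1 : 1 < c⁻¹ := one_lt_inv₀ hc0 |>.mpr hc1
  have htop : Tendsto (fun t => y N * c⁻¹ ^ t) atTop atTop :=
    Tendsto.const_mul_atTop (hpos N) (tendsto_pow_atTop_atTop_of_one_lt hinv1)
  obtain ⟨t, ht⟩ := (htop.eventually_gt_atTop 1).exists
  have := key t
  have := hbd (N + t)
  linarith

lemma decay_lemma {y γ : ℕ → ℝ} {L : ℝ} (hy0 : ∀ n, 0 ≤ y n)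
    (hγ : ∀ n, 0 < γ n) (hrec : ∀ n, y (n + 1) = y n / γ n)
    (hlim : Tendsto γ atTop (nhds L)) (hL : 1 < L) :
    Tendsto y atTop (nhds 0) := by
  set c : ℝ := (L + 1) / 2 with hc
  have hc1 : 1 < c := by rw [hc]; linarith
  have hc0 : 0 < c := by linarith
  have hcL : c < L := by rw [hc]; linarith
  have hev : ∀ᶠ n in atTop, c < γ n := hlim.eventually (eventually_gt_nhds hcL)
  obtain ⟨N, hN⟩ := eventually_atTop.mp hev
  have key : ∀ t, y (N + t) ≤ y N * (c⁻¹) ^ t := by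
    intro t
    induction t with
    | zero => simp
    | succ t iht =>
      have hγc : c < γ (N + t) := hN _ (Nat.le_add_right _ _)
      have h1 : y (N + t) / γ (N + t) ≤ y (N + t) / c :=
        div_le_div_of_nonneg_left (hy0 _) hc0 hγc.le
      have h2 : y (N + t) / c ≤ y N * c⁻¹ ^ t / c :=
        (div_le_div_iff_of_pos_right hc0).mpr iht
      have h3 : y N * c⁻¹ ^ (t + 1) = y N * c⁻¹ ^ t / c := by
        rw [pow_succ]; field_simp
      rw [show N + (t + 1) = (N + t) + 1 from rfl, hrec]
      calc y ((N + t) + 1 - 1) / γ (N + t) ≤ y (N + t) / c := h1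
        _ ≤ y N * c⁻¹ ^ t / c := h2
        _ = y N * c⁻¹ ^ (t + 1) := h3.symm
  have hg0 : Tendsto (fun t => y N * c⁻¹ ^ t) atTop (nhds 0) := by
    have : Tendsto (fun t : ℕ => (c⁻¹) ^ t) atTop (nhds 0) := by
      apply tendsto_pow_atTop_nhds_zero_of_lt_one (inv_nonneg.mpr hc0.le)
      exact inv_lt_one_of_one_lt₀ hc1
    simpa using this.const_mul (y N)
  have hshift : Tendsto (fun t => y (N + t)) atTop (nhds 0) :=
    squeeze_zero (fun t => hy0 _) key hg0
  have : (fun t => y (N + t)) = fun t => y (t + N) := by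
    funext t; rw [Nat.add_comm]
  rw [this] at hshift
  exact (tendsto_add_atTop_iff_nat N).mp hshift

end IPFPAux

set_option maxHeartbeats 2000000 in
/-- Keep the data of the divergence theorem, with `λ_1 < ⋯ < λ_r`.
Fix `k`, and let `P = {1,…,p} ∖ (I_1 ∪ ⋯ ∪ I_{k−1})`, `Q = {1,…,q} ∖ (J_1 ∪ ⋯ ∪ J_{k−1})`.
If `k = r`, the restricted problem on `P × Q` admits a solution. If `k < r`, the block
`A_k × B_k = I_k × (Q ∖ J_k)` is a cause of incompatibility of the restricted problem,
and among all causes of incompatibility `A × B` maximizing the ratio `a(A)/b(Q∖B)`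
(compared here in cross-multiplied form), it maximizes `A` and minimizes `B`. -/
theorem ipfp_divergence_partitions
    (p q : ℕ) (hp : 2 ≤ p) (hq : 2 ≤ q)
    (a : Fin p → ℝ) (b : Fin q → ℝ)
    (ha : ∀ i, 0 < a i) (hb : ∀ j, 0 < b j)
    (hsa : ∑ i, a i = 1) (hsb : ∑ j, b j = 1)
    (X0 : Matrix (Fin p) (Fin q) ℝ) (hX0 : memGamma1 X0)
    (r : ℕ) (hr : 0 < r) (hrpq : r ≤ min p q)
    (I : Fin r → Finset (Fin p)) (J : Fin r → Finset (Fin q))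
    (hI : ∀ i : Fin p, ∃! k, i ∈ I k) (hIne : ∀ k, (I k).Nonempty)
    (hJ : ∀ j : Fin q, ∃! k, j ∈ J k) (hJne : ∀ k, (J k).Nonempty)
    (lam : Fin r → ℝ)
    (hlam : ∀ k, lam k = (∑ j ∈ J k, b j) / ∑ i ∈ I k, a i)
    (hmono : ∀ k k' : Fin r, k < k' → lam k < lam k')
    (hR : ∀ k, ∀ i ∈ I k,
      Tendsto (fun n => Rrat a (ipfp a b X0 (2 * n)) i) atTop (nhds (lam k)))
    (hC : ∀ k, ∀ j ∈ J k,
      Tendsto (fun n => Crat b (ipfp a b X0 (2 * n + 1)) j) atTop (nhds ((lam k)⁻¹)))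
    (k : Fin r)
    (P : Finset (Fin p))
    (hP : P = ((Finset.univ.filter (fun k' : Fin r => k' < k)).biUnion I)ᶜ)
    (Q : Finset (Fin q))
    (hQ : Q = ((Finset.univ.filter (fun k' : Fin r => k' < k)).biUnion J)ᶜ) :
    ((k : ℕ) + 1 = r →
      ∃ Y : Matrix (Fin p) (Fin q) ℝ,
        (∀ i j, 0 ≤ Y i j) ∧
        (∀ i j, 0 < Y i j → i ∈ P ∧ j ∈ Q ∧ 0 < X0 i j) ∧
        (∀ i ∈ P, (∑ j ∈ Q, Y i j) = a i / ∑ i' ∈ P, a i') ∧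
        (∀ j ∈ Q, (∑ i ∈ P, Y i j) = b j / ∑ j' ∈ Q, b j')) ∧
    ((k : ℕ) + 1 < r →
      causeIncompat a b X0 P Q (I k) (Q \ J k) ∧
      ∀ A B, causeIncompat a b X0 P Q A B →
        (∑ i ∈ A, a i) * (∑ j ∈ Q \ (Q \ J k), b j)
            ≤ (∑ i ∈ I k, a i) * (∑ j ∈ Q \ B, b j) ∧
        ((∑ i ∈ A, a i) * (∑ j ∈ Q \ (Q \ J k), b j)
              = (∑ i ∈ I k, a i) * (∑ j ∈ Q \ B, b j) →
          A ⊆ I k ∧ Q \ J k ⊆ B)) := by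
  classical
  choose ci hci1 hci2 using hI
  choose cj hcj1 hcj2 using hJ
  have haI : ∀ m, 0 < ∑ i ∈ I m, a i := fun m => Finset.sum_pos (fun i _ => ha i) (hIne m)
  have hbJ : ∀ m, 0 < ∑ j ∈ J m, b j := fun m => Finset.sum_pos (fun j _ => hb j) (hJne m)
  have hlam0 : ∀ m, 0 < lam m := fun m => (hlam m) ▸ div_pos (hbJ m) (haI m)
  have hlamle : ∀ m m' : Fin r, m ≤ m' → lam m ≤ lam m' := by
    intro m m' h
    rcases eq_or_lt_of_le h with h | h
    · rw [h]
    · exact (hmono _ _ h).le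
  set X := ipfp a b X0 with hXdef
  have hinv := fun n => IPFPAux.ipfp_invariant ha hb hsa hsb hX0 n
  have hnn : ∀ n i j, 0 ≤ X n i j := fun n i j => (hinv n).1.1.1 i j
  have hsupp : ∀ n i j, 0 < X n i j ↔ 0 < X0 i j := fun n => (hinv n).2
  have hle1 : ∀ n i j, X n i j ≤ 1 := fun n => IPFPAux.entry_le_one (hinv n).1
  have hX0nn : ∀ i j, 0 ≤ X0 i j := hX0.1.1
  have hRpos : ∀ n i, 0 < Rrat a (X (2 * n)) i :=
    fun n i => div_pos ((hinv (2 * n)).1.1.2.1 i) (ha i)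
  have hCpos : ∀ n j, 0 < Crat b (X (2 * n + 1)) j :=
    fun n j => div_pos ((hinv (2 * n + 1)).1.1.2.2 j) (hb j)
  have hγpos : ∀ (i : Fin p) (j : Fin q) (n : ℕ),
      0 < Rrat a (X (2 * n)) i * Crat b (X (2 * n + 1)) j :=
    fun i j n => mul_pos (hRpos n i) (hCpos n j)
  have hγlim : ∀ i j, Tendsto (fun n => Rrat a (X (2 * n)) i * Crat b (X (2 * n + 1)) j)
      atTop (nhds (lam (ci i) * (lam (cj j))⁻¹)) :=
    fun i j => (hR (ci i) i (hci1 i)).mul (hC (cj j) j (hcj1 j))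
  have hrec : ∀ (i : Fin p) (j : Fin q) (n : ℕ), X (2 * (n + 1)) i j
      = X (2 * n) i j / (Rrat a (X (2 * n)) i * Crat b (X (2 * n + 1)) j) := by
    intro i j n
    have h2 : 2 * (n + 1) = 2 * n + 2 := by ring
    rw [hXdef, h2]
    exact IPFPAux.ipfp_recur a b X0 n i j
  have hL1 : ∀ i j, ci i < cj j → X0 i j = 0 := by
    intro i j hlt
    by_contra h0
    have hx0 : 0 < X0 i j := lt_of_le_of_ne (hX0nn i j) (Ne.symm h0)
    have hLlt : lam (ci i) * (lam (cj j))⁻¹ < 1 := by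
      rw [← div_eq_mul_inv]
      exact (div_lt_one (hlam0 _)).mpr (hmono _ _ hlt)
    exact IPFPAux.growth_lemma (y := fun n => X (2 * n) i j)
      (fun n => hle1 _ i j) (hγpos i j) (hrec i j) (hγlim i j)
      (mul_pos (hlam0 _) (inv_pos.mpr (hlam0 _))) hLlt
      ((hsupp (2 * 0) i j).mpr hx0)
  have hL2 : ∀ i j, cj j < ci i → Tendsto (fun n => X (2 * n) i j) atTop (nhds 0) := by
    intro i j hlt
    have h1 : 1 < lam (ci i) * (lam (cj j))⁻¹ := by
      rw [← div_eq_mul_inv]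
      exact (one_lt_div (hlam0 _)).mpr (hmono _ _ hlt)
    exact IPFPAux.decay_lemma (fun n => hnn _ i j) (hγpos i j) (hrec i j) (hγlim i j) h1
  -- a convergent subsequence of the even IPFP iterates
  have hcpt : IsCompact (Set.Icc (fun _ _ => (0 : ℝ) : Fin p → Fin q → ℝ) (fun _ _ => 1)) :=
    isCompact_Icc
  have hWmem : ∀ t : ℕ, (fun i j => X (2 * (t + 1)) i j)
      ∈ Set.Icc (fun (_ : Fin p) (_ : Fin q) => (0 : ℝ)) (fun _ _ => 1) := by
    intro t
    simp only [Set.mem_Icc, Pi.le_def]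
    exact ⟨fun i j => hnn _ i j, fun i j => hle1 _ i j⟩
  obtain ⟨Z, hZmem, φ, hφ, hZlim⟩ := hcpt.tendsto_subseq hWmem
  simp only [Set.mem_Icc, Pi.le_def] at hZmem
  have hψ : Tendsto (fun t => φ t + 1) atTop atTop :=
    tendsto_atTop_mono (fun t => Nat.le_succ_of_le (hφ.id_le t)) tendsto_id
  have hZe : ∀ i j, Tendsto (fun t => X (2 * (φ t + 1)) i j) atTop (nhds (Z i j)) := by
    intro i j
    have h1 := tendsto_pi_nhds.mp hZlim i
    exact tendsto_pi_nhds.mp h1 j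
  have hZnn : ∀ i j, 0 ≤ Z i j := fun i j => hZmem.1 i j
  have hZsupp : ∀ i j, 0 < Z i j → 0 < X0 i j := by
    intro i j h
    obtain ⟨t, ht⟩ := ((hZe i j).eventually (eventually_gt_nhds h)).exists
    exact (hsupp _ i j).mp ht
  have hZzero : ∀ i j, X0 i j = 0 → Z i j = 0 := by
    intro i j h
    by_contra hc
    have h1 : 0 < Z i j := lt_of_le_of_ne (hZnn i j) (Ne.symm hc)
    have h2 := hZsupp i j h1
    rw [h] at h2; exact lt_irrefl 0 h2
  have hZdiag : ∀ i j, ci i ≠ cj j → Z i j = 0 := by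
    intro i j hne
    rcases lt_or_gt_of_ne hne with h | h
    · exact hZzero i j (hL1 i j h)
    · have h2 : Tendsto (fun t => X (2 * (φ t + 1)) i j) atTop (nhds 0) :=
        (hL2 i j h).comp hψ
      exact tendsto_nhds_unique (hZe i j) h2
  have hZrow : ∀ i, ∑ j, Z i j = a i * lam (ci i) := by
    intro i
    have h1 : Tendsto (fun t => ∑ j, X (2 * (φ t + 1)) i j) atTop (nhds (∑ j, Z i j)) :=
      tendsto_finset_sum Finset.univ (fun j _ => hZe i j)
    have h3 : ∀ n : ℕ, (∑ j, X (2 * n) i j) = a i * Rrat a (X (2 * n)) i := by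
      intro n
      rw [Rrat, mul_comm (a i), div_mul_cancel₀ _ (ha i).ne']
      rfl
    have h4 : Tendsto (fun t => a i * Rrat a (X (2 * (φ t + 1))) i) atTop
        (nhds (a i * lam (ci i))) :=
      Tendsto.const_mul (a i) ((hR (ci i) i (hci1 i)).comp hψ)
    have h2 : Tendsto (fun t => ∑ j, X (2 * (φ t + 1)) i j) atTop
        (nhds (a i * lam (ci i))) := by
      simp only [h3]; exact h4
    exact tendsto_nhds_unique h1 h2
  have hZcol : ∀ j, ∑ i, Z i j = b j := by
    intro j
    have h1 : Tendsto (fun t => ∑ i, X (2 * (φ t + 1)) i j) atTop (nhds (∑ i, Z i j)) :=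
      tendsto_finset_sum Finset.univ (fun i _ => hZe i j)
    have h2 : ∀ t : ℕ, (∑ i, X (2 * (t + 1)) i j) = b j := by
      intro t
      have h3 : 2 * (t + 1) = 2 * t + 2 := by ring
      rw [hXdef, h3, IPFPAux.ipfp_odd_succ]
      exact (IPFPAux.TC_step hb hsb (hinv (2 * t + 1)).1).2.2 j
    have h4 : Tendsto (fun t => ∑ i, X (2 * (φ t + 1)) i j) atTop (nhds (b j)) := by
      simp only [h2]; exact tendsto_const_nhds
    exact tendsto_nhds_unique h1 h4
  -- partition bookkeeping
  set S : Finset (Fin r) := Finset.univ.filter (fun m => k ≤ m) with hS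
  have hSmem : ∀ m : Fin r, m ∈ S ↔ k ≤ m := by
    intro m; rw [hS]; simp
  have hdisjI : (↑S : Set (Fin r)).PairwiseDisjoint I := by
    intro m _ m' _ hne
    simp only [Function.onFun]
    exact Finset.disjoint_left.mpr fun i h1 h2 =>
      hne ((hci2 i m h1).trans (hci2 i m' h2).symm)
  have hdisjJ : (↑S : Set (Fin r)).PairwiseDisjoint J := by
    intro m _ m' _ hne
    simp only [Function.onFun]
    exact Finset.disjoint_left.mpr fun j h1 h2 =>
      hne ((hcj2 j m h1).trans (hcj2 j m' h2).symm)
  have hPmem : ∀ i, i ∈ P ↔ k ≤ ci i := by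
    intro i
    rw [hP]
    simp only [Finset.mem_compl, Finset.mem_biUnion, Finset.mem_filter, Finset.mem_univ,
      true_and, not_exists, not_and]
    constructor
    · intro h
      by_contra hc
      push_neg at hc
      exact h (ci i) hc (hci1 i)
    · intro h m hm him
      have h1 := hci2 i m him
      rw [h1] at hm
      exact absurd hm (not_lt.mpr h)
  have hQmem : ∀ j, j ∈ Q ↔ k ≤ cj j := by
    intro j
    rw [hQ]
    simp only [Finset.mem_compl, Finset.mem_biUnion, Finset.mem_filter, Finset.mem_univ,
      true_and, not_exists, not_and]
    constructor
    · intro h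
      by_contra hc
      push_neg at hc
      exact h (cj j) hc (hcj1 j)
    · intro h m hm hjm
      have h1 := hcj2 j m hjm
      rw [h1] at hm
      exact absurd hm (not_lt.mpr h)
  have hPS : P = S.biUnion I := by
    ext i
    rw [hPmem, Finset.mem_biUnion]
    constructor
    · intro h; exact ⟨ci i, (hSmem _).mpr h, hci1 i⟩
    · rintro ⟨m, hm, him⟩
      have hmm := (hSmem m).mp hm
      rwa [hci2 i m him] at hmm
  have hQS : Q = S.biUnion J := by
    ext j
    rw [hQmem, Finset.mem_biUnion]
    constructor
    · intro h; exact ⟨cj j, (hSmem _).mpr h, hcj1 j⟩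
    · rintro ⟨m, hm, hjm⟩
      have hmm := (hSmem m).mp hm
      rwa [hcj2 j m hjm] at hmm
  have haP : ∑ i ∈ P, a i = ∑ m ∈ S, ∑ i ∈ I m, a i := by
    rw [hPS]; exact Finset.sum_biUnion hdisjI
  have hbQ : ∑ j ∈ Q, b j = ∑ m ∈ S, ∑ j ∈ J m, b j := by
    rw [hQS]; exact Finset.sum_biUnion hdisjJ
  have hbJlam : ∀ m, ∑ j ∈ J m, b j = lam m * ∑ i ∈ I m, a i := by
    intro m
    rw [hlam m, div_mul_cancel₀ _ (haI m).ne']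
  have hrowblock : ∀ m, ∀ i ∈ I m, ∑ j ∈ J m, Z i j = a i * lam m := by
    intro m i him
    have hcieq : m = ci i := hci2 i m him
    have h1 : ∑ j ∈ J m, Z i j = ∑ j, Z i j := by
      apply Finset.sum_subset (Finset.subset_univ _)
      intro j _ hj
      apply hZdiag
      rw [← hcieq]
      intro hmeq
      exact hj (by rw [hmeq]; exact hcj1 j)
    rw [h1, hZrow, ← hcieq]
  have hcolblock : ∀ m, ∀ j ∈ J m, ∑ i ∈ I m, Z i j = b j := by
    intro m j hjm
    have hcjeq : m = cj j := hcj2 j m hjm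
    have h1 : ∑ i ∈ I m, Z i j = ∑ i, Z i j := by
      apply Finset.sum_subset (Finset.subset_univ _)
      intro i _ hi
      apply hZdiag
      rw [← hcjeq]
      intro hmeq
      exact hi (by rw [← hmeq]; exact hci1 i)
    rw [h1, hZcol]
  have hJQ : ∀ m : Fin r, k ≤ m → ∀ j ∈ J m, j ∈ Q := by
    intro m hm j hj
    rw [hQmem]
    rwa [← hcj2 j m hj]
  constructor
  · -- k is the last class: restricted problem solvable
    intro hkr
    have hSk : S = {k} := by
      ext m
      rw [hSmem, Finset.mem_singleton]
      constructor
      · intro h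
        have h1 : (m : ℕ) < r := m.isLt
        have h2 : (k : ℕ) ≤ (m : ℕ) := h
        exact Fin.ext (by omega)
      · intro h; rw [h]
    have hPk : P = I k := by rw [hPS, hSk, Finset.singleton_biUnion]
    have hQk : Q = J k := by rw [hQS, hSk, Finset.singleton_biUnion]
    refine ⟨fun i j => if i ∈ I k ∧ j ∈ J k then Z i j / (∑ j' ∈ J k, b j') else 0,
      ?_, ?_, ?_, ?_⟩
    · intro i j
      dsimp only
      split_ifs with hc
      · exact div_nonneg (hZnn i j) (hbJ k).le
      · exact le_refl 0
    · intro i j h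
      dsimp only at h
      split_ifs at h with hc
      · have hz : 0 < Z i j := by
          by_contra hz
          push_neg at hz
          have : Z i j / (∑ j' ∈ J k, b j') ≤ 0 :=
            div_nonpos_iff.mpr (Or.inr ⟨hz, (hbJ k).le⟩)
          linarith
        exact ⟨by rw [hPk]; exact hc.1, by rw [hQk]; exact hc.2, hZsupp i j hz⟩
      · exact absurd h (lt_irrefl 0)
    · intro i hi
      have hiIk : i ∈ I k := by rwa [hPk] at hi
      rw [hQk, hPk]
      have h5 : ∀ j ∈ J k,
          (if i ∈ I k ∧ j ∈ J k then Z i j / (∑ j' ∈ J k, b j') else 0)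
            = Z i j / (∑ j' ∈ J k, b j') := by
        intro j hj; rw [if_pos ⟨hiIk, hj⟩]
      rw [Finset.sum_congr rfl h5, ← Finset.sum_div, hrowblock k i hiIk, hbJlam k]
      rw [mul_comm (lam k) (∑ i' ∈ I k, a i'), mul_div_mul_right _ _ (hlam0 k).ne']
    · intro j hj
      have hjJk : j ∈ J k := by rwa [hQk] at hj
      rw [hQk, hPk]
      have h5 : ∀ i ∈ I k,
          (if i ∈ I k ∧ j ∈ J k then Z i j / (∑ j' ∈ J k, b j') else 0)
            = Z i j / (∑ j' ∈ J k, b j') := by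
        intro i hi; rw [if_pos ⟨hi, hjJk⟩]
      rw [Finset.sum_congr rfl h5, ← Finset.sum_div, hcolblock k j hjJk]
  · -- k is not the last class
    intro hkr
    set k1 : Fin r := ⟨(k : ℕ) + 1, hkr⟩ with hk1
    have hkk1 : k < k1 := by
      rw [Fin.lt_def]
      simp [hk1]
    have hQQ : Q \ (Q \ J k) = J k := by
      rw [sdiff_sdiff_right_self, Finset.inf_eq_inter]
      exact Finset.inter_eq_right.mpr (fun j hj => hJQ k le_rfl j hj)
    have hIkP : I k ⊆ P := fun i hi => (hPmem i).mpr (le_of_eq (hci2 i k hi))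
    have hvanishIk : ∀ i ∈ I k, ∀ j ∈ Q \ J k, X0 i j = 0 := by
      intro i hi j hj
      rw [Finset.mem_sdiff] at hj
      obtain ⟨hjQ, hjk⟩ := hj
      apply hL1
      rw [← hci2 i k hi]
      have h1 : k ≤ cj j := (hQmem j).mp hjQ
      rcases lt_or_eq_of_le h1 with h | h
      · exact h
      · exact absurd (show j ∈ J k by rw [h]; exact hcj1 j) hjk
    obtain ⟨j1, hj1⟩ := hJne k1
    have hj1Q : j1 ∈ Q := hJQ k1 hkk1.le j1 hj1
    have hj1k : j1 ∉ J k := by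
      intro hc
      exact absurd ((hcj2 j1 k hc).trans (hcj2 j1 k1 hj1).symm) (ne_of_lt hkk1)
    have hsum_lt : (∑ m ∈ S, lam k * ∑ i ∈ I m, a i)
        < ∑ m ∈ S, lam m * ∑ i ∈ I m, a i := by
      apply Finset.sum_lt_sum
      · intro m hm
        exact mul_le_mul_of_nonneg_right (hlamle k m ((hSmem m).mp hm)) (haI m).le
      · exact ⟨k1, (hSmem k1).mpr hkk1.le,
          mul_lt_mul_of_pos_right (hmono k k1 hkk1) (haI k1)⟩
    have hineq : (∑ i ∈ P, a i) * (∑ j ∈ Q \ (Q \ J k), b j)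
        < (∑ i ∈ I k, a i) * ∑ j ∈ Q, b j := by
      rw [hQQ, haP, hbQ, hbJlam k]
      have h2 : ∑ m ∈ S, ∑ j ∈ J m, b j = ∑ m ∈ S, lam m * ∑ i ∈ I m, a i :=
        Finset.sum_congr rfl fun m _ => hbJlam m
      rw [h2]
      calc (∑ m ∈ S, ∑ i ∈ I m, a i) * (lam k * ∑ i ∈ I k, a i)
          = (∑ m ∈ S, lam k * ∑ i ∈ I m, a i) * ∑ i ∈ I k, a i := by
            rw [← Finset.mul_sum]; ring
        _ < (∑ m ∈ S, lam m * ∑ i ∈ I m, a i) * ∑ i ∈ I k, a i :=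
            mul_lt_mul_of_pos_right hsum_lt (haI k)
        _ = (∑ i ∈ I k, a i) * ∑ m ∈ S, lam m * ∑ i ∈ I m, a i := mul_comm _ _
    refine ⟨⟨hIne k, ⟨j1, Finset.mem_sdiff.mpr ⟨hj1Q, hj1k⟩⟩, hIkP,
      Finset.sdiff_subset, hvanishIk, hineq⟩, ?_⟩
    intro A B hAB
    obtain ⟨hAne, hBne, hAP, hBQ, hvan, hstrict⟩ := hAB
    have hAdec : A = S.biUnion (fun m => A ∩ I m) := by
      ext i
      rw [Finset.mem_biUnion]
      constructor
      · intro hiA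
        exact ⟨ci i, (hSmem _).mpr ((hPmem i).mp (hAP hiA)),
          Finset.mem_inter.mpr ⟨hiA, hci1 i⟩⟩
      · rintro ⟨m, _, him⟩
        exact (Finset.mem_inter.mp him).1
    have hdisjAI : (↑S : Set (Fin r)).PairwiseDisjoint (fun m => A ∩ I m) := by
      intro m _ m' _ hne
      simp only [Function.onFun]
      exact Finset.disjoint_left.mpr fun i h1 h2 =>
        hne ((hci2 i m (Finset.mem_inter.mp h1).2).trans
          (hci2 i m' (Finset.mem_inter.mp h2).2).symm)
    have haA : ∑ i ∈ A, a i = ∑ m ∈ S, ∑ i ∈ A ∩ I m, a i := by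
      conv_lhs => rw [hAdec]
      exact Finset.sum_biUnion hdisjAI
    have hQBdec : Q \ B = S.biUnion (fun m => J m \ B) := by
      ext j
      rw [Finset.mem_sdiff, Finset.mem_biUnion]
      constructor
      · rintro ⟨hjQ, hjB⟩
        exact ⟨cj j, (hSmem _).mpr ((hQmem j).mp hjQ),
          Finset.mem_sdiff.mpr ⟨hcj1 j, hjB⟩⟩
      · rintro ⟨m, hm, hjm⟩
        rw [Finset.mem_sdiff] at hjm
        exact ⟨hJQ m ((hSmem m).mp hm) j hjm.1, hjm.2⟩
    have hdisjJB : (↑S : Set (Fin r)).PairwiseDisjoint (fun m => J m \ B) := by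
      intro m _ m' _ hne
      simp only [Function.onFun]
      exact Finset.disjoint_left.mpr fun j h1 h2 =>
        hne ((hcj2 j m (Finset.mem_sdiff.mp h1).1).trans
          (hcj2 j m' (Finset.mem_sdiff.mp h2).1).symm)
    have hbQB : ∑ j ∈ Q \ B, b j = ∑ m ∈ S, ∑ j ∈ J m \ B, b j := by
      conv_lhs => rw [hQBdec]
      exact Finset.sum_biUnion hdisjJB
    have hkey : ∀ m ∈ S, lam m * ∑ i ∈ A ∩ I m, a i ≤ ∑ j ∈ J m \ B, b j := by
      intro m _
      have step1 : ∀ i ∈ A ∩ I m, a i * lam m = ∑ j ∈ J m \ B, Z i j := by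
        intro i hi
        rw [Finset.mem_inter] at hi
        have h1 : ∑ j ∈ J m \ B, Z i j = ∑ j ∈ J m, Z i j := by
          apply Finset.sum_subset Finset.sdiff_subset
          intro j hjm hjnot
          have hjB : j ∈ B := by
            by_contra hc
            exact hjnot (Finset.mem_sdiff.mpr ⟨hjm, hc⟩)
          exact hZzero i j (hvan i hi.1 j hjB)
        rw [h1, hrowblock m i hi.2]
      calc lam m * ∑ i ∈ A ∩ I m, a i = ∑ i ∈ A ∩ I m, a i * lam m := by
            rw [Finset.mul_sum]
            exact Finset.sum_congr rfl fun i _ => mul_comm _ _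
        _ = ∑ i ∈ A ∩ I m, ∑ j ∈ J m \ B, Z i j := Finset.sum_congr rfl step1
        _ = ∑ j ∈ J m \ B, ∑ i ∈ A ∩ I m, Z i j := Finset.sum_comm
        _ ≤ ∑ j ∈ J m \ B, b j := by
            apply Finset.sum_le_sum
            intro j _
            calc ∑ i ∈ A ∩ I m, Z i j ≤ ∑ i, Z i j :=
                  Finset.sum_le_sum_of_subset_of_nonneg (Finset.subset_univ _)
                    (fun i _ _ => hZnn i j)
              _ = b j := hZcol j
    have hkey2 : ∀ m ∈ S, lam k * ∑ i ∈ A ∩ I m, a i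
        ≤ lam m * ∑ i ∈ A ∩ I m, a i := by
      intro m hm
      exact mul_le_mul_of_nonneg_right (hlamle k m ((hSmem m).mp hm))
        (Finset.sum_nonneg fun i _ => (ha i).le)
    have hmain : lam k * ∑ i ∈ A, a i ≤ ∑ j ∈ Q \ B, b j := by
      rw [haA, hbQB, Finset.mul_sum]
      calc ∑ m ∈ S, lam k * ∑ i ∈ A ∩ I m, a i
          ≤ ∑ m ∈ S, lam m * ∑ i ∈ A ∩ I m, a i := Finset.sum_le_sum hkey2
        _ ≤ ∑ m ∈ S, ∑ j ∈ J m \ B, b j := Finset.sum_le_sum hkey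
    constructor
    · rw [hQQ, hbJlam k]
      calc (∑ i ∈ A, a i) * (lam k * ∑ i ∈ I k, a i)
          = (lam k * ∑ i ∈ A, a i) * ∑ i ∈ I k, a i := by ring
        _ ≤ (∑ j ∈ Q \ B, b j) * ∑ i ∈ I k, a i :=
            mul_le_mul_of_nonneg_right hmain (haI k).le
        _ = (∑ i ∈ I k, a i) * ∑ j ∈ Q \ B, b j := mul_comm _ _
    · intro heq
      rw [hQQ, hbJlam k] at heq
      have heq2 : lam k * ∑ i ∈ A, a i = ∑ j ∈ Q \ B, b j := by
        apply mul_right_cancel₀ (haI k).ne'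
        calc (lam k * ∑ i ∈ A, a i) * ∑ i ∈ I k, a i
            = (∑ i ∈ A, a i) * (lam k * ∑ i ∈ I k, a i) := by ring
          _ = (∑ i ∈ I k, a i) * ∑ j ∈ Q \ B, b j := heq
          _ = (∑ j ∈ Q \ B, b j) * ∑ i ∈ I k, a i := mul_comm _ _
      have hsum_eq : ∑ m ∈ S, lam k * ∑ i ∈ A ∩ I m, a i
          = ∑ m ∈ S, ∑ j ∈ J m \ B, b j := by
        rw [← Finset.mul_sum, ← haA, heq2, hbQB]
      have hterm_le : ∀ m ∈ S, lam k * ∑ i ∈ A ∩ I m, a i ≤ ∑ j ∈ J m \ B, b j :=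
        fun m hm => le_trans (hkey2 m hm) (hkey m hm)
      have hterm : ∀ m ∈ S, lam k * ∑ i ∈ A ∩ I m, a i = ∑ j ∈ J m \ B, b j :=
        (Finset.sum_eq_sum_iff_of_le hterm_le).mp hsum_eq
      have hAempty : ∀ m ∈ S, m ≠ k → A ∩ I m = ∅ ∧ J m ⊆ B := by
        intro m hm hne
        have hklt : k < m := lt_of_le_of_ne ((hSmem m).mp hm) (Ne.symm hne)
        have hAm : ∑ i ∈ A ∩ I m, a i = 0 := by
          by_contra hc
          have hpos : 0 < ∑ i ∈ A ∩ I m, a i :=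
            lt_of_le_of_ne (Finset.sum_nonneg fun i _ => (ha i).le) (Ne.symm hc)
          have h1 : lam k * ∑ i ∈ A ∩ I m, a i < lam m * ∑ i ∈ A ∩ I m, a i :=
            mul_lt_mul_of_pos_right (hmono k m hklt) hpos
          have h2 := hkey m hm
          have h3 := hterm m hm
          linarith
        have hAIe : A ∩ I m = ∅ := by
          by_contra hc
          obtain ⟨i, hi⟩ := Finset.nonempty_iff_ne_empty.mpr hc
          have h1 : 0 < ∑ i ∈ A ∩ I m, a i :=
            Finset.sum_pos (fun i _ => ha i) ⟨i, hi⟩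
          rw [hAm] at h1; exact lt_irrefl 0 h1
        have hJB : J m ⊆ B := by
          have h3 := hterm m hm
          rw [hAm, mul_zero] at h3
          intro j hj
          by_contra hc
          have h1 : 0 < ∑ j ∈ J m \ B, b j :=
            Finset.sum_pos (fun j _ => hb j) ⟨j, Finset.mem_sdiff.mpr ⟨hj, hc⟩⟩
          rw [← h3] at h1; exact lt_irrefl 0 h1
        exact ⟨hAIe, hJB⟩
      constructor
      · intro i hiA
        have h1 : ci i ∈ S := (hSmem _).mpr ((hPmem i).mp (hAP hiA))
        by_cases hc : ci i = k
        · rw [← hc]; exact hci1 i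
        · have h2 := (hAempty (ci i) h1 hc).1
          exact absurd (Finset.mem_inter.mpr ⟨hiA, hci1 i⟩)
            (by rw [h2]; exact Finset.notMem_empty i)
      · intro j hj
        rw [Finset.mem_sdiff] at hj
        have h1 : cj j ∈ S := (hSmem _).mpr ((hQmem j).mp hj.1)
        have hc : cj j ≠ k := fun hc => hj.2 (by rw [← hc]; exact hcj1 j)
        exact (hAempty (cj j) h1 hc).2 (hcj1 j)
end

section
/- Let M be a d×d doubly-stochastic matrix with all diagonal entries bounded below by some constant γ > 0. For a column vector V ∈ ℝ^d, define its dispersion D(V) = Σ_{1≤i,j≤d} |V(i) − V(j)|. Then for every V ∈ ℝ^d, D(V) − D(MV) ≥ γ·‖MV − V‖₁. -/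
/-!
Write `W = M V`. Since the rows of `M` are probability vectors,
`W i - W j = ∑ k l, M i k M j l (V k - V l)`, so `|W i - W j|` is at most
`A i j = ∑ k l, M i k M j l |V k - V l|`; since the columns sum to one as well,
`∑ i j, A i j = D(V)`. Hence `D(V) - D(W)` is a sum of nonnegative slacks `A i j - |W i - W j|`,
and the diagonal ones alone give the bound: keeping only the terms `l = i` of `A i i` shows
`A i i ≥ M i i ∑ k, M i k |V k - V i| ≥ γ |W i - V i|`.
-/

open Finset Matrix

variable {R n : Type*} [CommRing R] [Fintype n]

lemma dotProduct_sub_dotProduct_eq_sum {p q : n → R} (V : n → R) (hp : ∑ k, p k = 1)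
    (hq : ∑ l, q l = 1) :
    p ⬝ᵥ V - q ⬝ᵥ V = ∑ k, ∑ l, p k * q l * (V k - V l) := by
  have expand : ∀ k l, p k * q l * (V k - V l) = q l * (p k * V k) - p k * (q l * V l) := by
    intro k l; ring
  simp only [expand, sum_sub_distrib, ← sum_mul, ← mul_sum, hp, hq, one_mul, dotProduct]

variable [LinearOrder R]

def dispersion (V : n → R) : R := ∑ i, ∑ j, |V i - V j|

/-- For probability vectors `p`, `q` this is the expectation of `|V K - V L|` for independent
`K ∼ p` and `L ∼ q`. -/
def meanAbsDiff (p q V : n → R) : R := ∑ k, ∑ l, p k * q l * |V k - V l|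

lemma sum_sum_meanAbsDiff_eq_dispersion {M : Matrix n n R} (hcol : ∀ j, ∑ i, M i j = 1)
    (V : n → R) : ∑ i, ∑ j, meanAbsDiff (M i) (M j) V = dispersion V :=
  calc ∑ i, ∑ j, meanAbsDiff (M i) (M j) V
      = ∑ k, ∑ l, (∑ i, M i k) * (∑ j, M j l) * |V k - V l| := by
        simp only [meanAbsDiff, sum_mul, mul_sum]
        exact (sum_congr rfl fun i _ => sum_comm).trans <| sum_comm.trans <|
          sum_congr rfl fun k _ => (sum_congr rfl fun i _ => sum_comm).trans <| sum_comm.trans <|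
            sum_congr rfl fun l _ => sum_comm
    _ = dispersion V := by simp only [hcol, one_mul, dispersion]

variable [IsOrderedRing R]

section WeightVectors

variable {p q : n → R} (V : n → R)

lemma abs_dotProduct_sub_dotProduct_le (hp₀ : ∀ k, 0 ≤ p k) (hq₀ : ∀ l, 0 ≤ q l)
    (hp : ∑ k, p k = 1) (hq : ∑ l, q l = 1) :
    |p ⬝ᵥ V - q ⬝ᵥ V| ≤ meanAbsDiff p q V := by
  rw [dotProduct_sub_dotProduct_eq_sum V hp hq]
  refine (abs_sum_le_sum_abs _ _).trans (sum_le_sum fun k _ => ?_)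
  refine (abs_sum_le_sum_abs _ _).trans_eq (sum_congr rfl fun l _ => ?_)
  rw [abs_mul, abs_of_nonneg (mul_nonneg (hp₀ k) (hq₀ l))]

lemma mul_abs_dotProduct_sub_le_meanAbsDiff [DecidableEq n] (hp₀ : ∀ k, 0 ≤ p k)
    (hp : ∑ k, p k = 1) (i : n) :
    p i * |p ⬝ᵥ V - V i| ≤ meanAbsDiff p p V := by
  -- compare `p` with the point mass at `i`, whose dot product with `V` is `V i`
  have hδ : ∀ l, 0 ≤ (Pi.single i 1 : n → R) l := Pi.single_nonneg.2 zero_le_one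
  have h := abs_dotProduct_sub_dotProduct_le V hp₀ hδ hp (by simp)
  simp only [single_dotProduct, one_mul, meanAbsDiff, Pi.single_apply, mul_ite, mul_one,
    mul_zero, ite_mul, zero_mul, sum_ite_eq', mem_univ, if_true] at h
  calc p i * |p ⬝ᵥ V - V i| ≤ p i * ∑ k, p k * |V k - V i| := mul_le_mul_of_nonneg_left h (hp₀ i)
    _ = ∑ k, p k * p i * |V k - V i| := by rw [mul_sum]; exact sum_congr rfl fun k _ => by ring
    _ ≤ meanAbsDiff p p V := sum_le_sum fun k _ =>
      single_le_sum (f := fun l => p k * p l * |V k - V l|)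
        (fun l _ => mul_nonneg (mul_nonneg (hp₀ k) (hp₀ l)) (abs_nonneg _)) (mem_univ i)

end WeightVectors

lemma sum_meanAbsDiff_diag_le_dispersion_sub [DecidableEq n] {M : Matrix n n R}
    (hM : M ∈ doublyStochastic R n) (V : n → R) :
    ∑ i, meanAbsDiff (M i) (M i) V ≤ dispersion V - dispersion (M *ᵥ V) := by
  rw [← sum_sum_meanAbsDiff_eq_dispersion (sum_col_of_mem_doublyStochastic hM), dispersion,
    ← sum_sub_distrib]
  refine sum_le_sum fun i _ => ?_
  rw [← sum_sub_distrib]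
  have slack : ∀ j, 0 ≤ meanAbsDiff (M i) (M j) V - |(M *ᵥ V) i - (M *ᵥ V) j| := fun j =>
    sub_nonneg.2 <| abs_dotProduct_sub_dotProduct_le V (fun _ => hM.1 _ _) (fun _ => hM.1 _ _)
      (sum_row_of_mem_doublyStochastic hM i) (sum_row_of_mem_doublyStochastic hM j)
  simpa using single_le_sum (fun j _ => slack j) (mem_univ i)

theorem dispersion_decrease_general
    (d : ℕ) (γ : ℝ)
    (M : Matrix (Fin d) (Fin d) ℝ)
    (hM : ∀ i j, 0 ≤ M i j) (hrow : ∀ i, ∑ j, M i j = 1) (hcol : ∀ j, ∑ i, M i j = 1)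
    (hdiag : ∀ i, γ ≤ M i i)
    (V : Fin d → ℝ) :
    γ * ∑ i, |M.mulVec V i - V i| ≤
      (∑ i, ∑ j, |V i - V j|) - ∑ i, ∑ j, |M.mulVec V i - M.mulVec V j| :=
  calc γ * ∑ i, |M.mulVec V i - V i| ≤ ∑ i, M i i * |M.mulVec V i - V i| := by
        rw [mul_sum]
        exact sum_le_sum fun i _ => mul_le_mul_of_nonneg_right (hdiag i) (abs_nonneg _)
    _ ≤ ∑ i, meanAbsDiff (M i) (M i) V := sum_le_sum fun i _ =>
        mul_abs_dotProduct_sub_le_meanAbsDiff V (hM i) (hrow i) i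
    _ ≤ dispersion V - dispersion (M *ᵥ V) :=
        sum_meanAbsDiff_diag_le_dispersion_sub (mem_doublyStochastic_iff_sum.2 ⟨hM, hrow, hcol⟩) V

/-- Let `M` be a `d × d` doubly-stochastic matrix with all diagonal
entries at least `γ > 0`. With the dispersion `D(V) = Σ_{i,j} |V(i) − V(j)|`, every
`V ∈ ℝᵈ` satisfies `D(V) − D(MV) ≥ γ·‖MV − V‖₁`. -/
theorem dispersion_decrease
    (d : ℕ) (γ : ℝ) (hγ : 0 < γ)
    (M : Matrix (Fin d) (Fin d) ℝ)
    (hM : ∀ i j, 0 ≤ M i j) (hrow : ∀ i, ∑ j, M i j = 1) (hcol : ∀ j, ∑ i, M i j = 1)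
    (hdiag : ∀ i, γ ≤ M i i)
    (V : Fin d → ℝ) :
    γ * ∑ i, |M.mulVec V i - V i| ≤
      (∑ i, ∑ j, |V i - V j|) - ∑ i, ∑ j, |M.mulVec V i - M.mulVec V j| :=
  dispersion_decrease_general d γ M hM hrow hcol hdiag V
end
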